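/- Let f = Σ_{i=1}^n γ_i u_i be a linear combination of pairwise orthogonal eigenvectors of J, i.e. γ_i ≠ 0, λ_i u_i ∈ ∂J(u_i) with λ_i > 0 for each i, and ⟨u_i, u_j⟩ = 0 for i ≠ j. Define p_k := Σ_{i=k}^n sgn(γ_i) λ_i u_i and assume p_k ∈ ∂J(0) for every k = 1, …, n (the SUB0 condition), and assume the ordering |γ_i|/λ_i < |γ_{i+1}|/λ_{i+1} for i = 1, …, n−1. Set τ_0 := 0 and τ_k := |γ_k|/λ_k for k = 1, …, n. Then for every k = 1, …, n and every τ with τ_{k−1} < τ ≤ τ_k, the minimizer of v ↦ (1/2)‖v − f‖_H^2 + τ J(v) over H is v_τ = Σ_{i=k}^n sgn(γ_i)(|γ_i| − τ λ_i) u_i. -/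

import Mathlib

open Filter Topology Set
open scoped ENNReal RealInnerProductSpace

noncomputable section

/-- The variational energy `E_t^{α,β}(u; f)`. -/
def En {X : Type*} [NormedAddCommGroup X] [NormedSpace ℝ X]
    {H : Type*} [NormedAddCommGroup H] [InnerProductSpace ℝ H]
    (A : X →L[ℝ] H) (J : X → ℝ≥0∞) (f : H) (t α β : ℝ) (u : X) : ℝ≥0∞ :=
  ENNReal.ofReal ((1 / α) * ‖A u - f‖ ^ α) + ENNReal.ofReal (t / β) * J u ^ β

/-- `u` is a minimizer of `E_t^{α,β}(·; f)`. -/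
def IsMinimizer {X : Type*} [NormedAddCommGroup X] [NormedSpace ℝ X]
    {H : Type*} [NormedAddCommGroup H] [InnerProductSpace ℝ H]
    (A : X →L[ℝ] H) (J : X → ℝ≥0∞) (f : H) (t α β : ℝ) (u : X) : Prop :=
  ∀ v, En A J f t α β u ≤ En A J f t α β v

/-- `J` is proper. -/
def IsProperFn {X : Type*} (J : X → ℝ≥0∞) : Prop := ∃ u, J u ≠ ⊤

/-- `J` is absolutely one-homogeneous. -/
def AbsOneHom {X : Type*} [NormedAddCommGroup X] [NormedSpace ℝ X] (J : X → ℝ≥0∞) : Prop :=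
  ∀ (c : ℝ) (u : X), J (c • u) = ENNReal.ofReal |c| * J u

/-- `J` is convex. -/
def EConvexFn {X : Type*} [NormedAddCommGroup X] [NormedSpace ℝ X] (J : X → ℝ≥0∞) : Prop :=
  ∀ (u v : X) (a b : ℝ), 0 ≤ a → 0 ≤ b → a + b = 1 →
    J (a • u + b • v) ≤ ENNReal.ofReal a * J u + ENNReal.ofReal b * J v

/-- The subdifferential of `J` at `u`; dual elements are represented as `X →L[ℝ] ℝ`. -/
def subdiff {X : Type*} [NormedAddCommGroup X] [NormedSpace ℝ X]
    (J : X → ℝ≥0∞) (u : X) : Set (X →L[ℝ] ℝ) :=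
  {p | ∀ v, (J u : EReal) + ((p (v - u) : ℝ) : EReal) ≤ (J v : EReal)}

/-- The adjoint `A* q` as an element of the dual of `X`. -/
def Astar {X : Type*} [NormedAddCommGroup X] [NormedSpace ℝ X]
    {H : Type*} [NormedAddCommGroup H] [InnerProductSpace ℝ H]
    (A : X →L[ℝ] H) (q : H) : X →L[ℝ] ℝ :=
  (innerSL ℝ q).comp A

/-- The set of norms `‖q‖` of source elements `q` for solutions of `Au = f`. -/
def SourceNorms {X : Type*} [NormedAddCommGroup X] [NormedSpace ℝ X]
    {H : Type*} [NormedAddCommGroup H] [InnerProductSpace ℝ H]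
    (A : X →L[ℝ] H) (J : X → ℝ≥0∞) (f : H) : Set ℝ :=
  {r | ∃ (u : X) (q : H), J u ≠ ⊤ ∧ A u = f ∧ Astar A q ∈ subdiff J u ∧ r = ‖q‖}

/-- The weak-star topology on the dual `Y →L[ℝ] ℝ` of `Y`. -/
def weakStar (Y : Type*) [NormedAddCommGroup Y] [NormedSpace ℝ Y] :
    TopologicalSpace (Y →L[ℝ] ℝ) :=
  TopologicalSpace.induced (fun (u : Y →L[ℝ] ℝ) (y : Y) => u y) inferInstance

/-- `J` is lower semicontinuous with respect to the weak-star topology. -/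
def WeakStarLSC {Y : Type*} [NormedAddCommGroup Y] [NormedSpace ℝ Y]
    (J : (Y →L[ℝ] ℝ) → ℝ≥0∞) : Prop :=
  @LowerSemicontinuous _ _ (weakStar Y) _ J

/-- `A` is weak-star-to-weak continuous. -/
def WeakStarToWeakCont {Y : Type*} [NormedAddCommGroup Y] [NormedSpace ℝ Y]
    {H : Type*} [NormedAddCommGroup H] [InnerProductSpace ℝ H]
    (A : (Y →L[ℝ] ℝ) →L[ℝ] H) : Prop :=
  ∀ h : H, @Continuous _ _ (weakStar Y) _ (fun u => (⟪A u, h⟫ : ℝ))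

/-- Assumption 1: `‖A ·‖` is a norm on `N(J)` equivalent to the restriction of `‖·‖`. -/
def ANormEquiv {X : Type*} [NormedAddCommGroup X] [NormedSpace ℝ X]
    {H : Type*} [NormedAddCommGroup H] [InnerProductSpace ℝ H]
    (A : X →L[ℝ] H) (J : X → ℝ≥0∞) : Prop :=
  ∃ c > (0:ℝ), ∃ C > (0:ℝ), ∀ u, J u = 0 → c * ‖u‖ ≤ ‖A u‖ ∧ ‖A u‖ ≤ C * ‖u‖

/-- `PA` is the `A`-orthogonal projection onto `N(J)`. -/
def IsAProj {X : Type*} [NormedAddCommGroup X] [NormedSpace ℝ X]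
    {H : Type*} [NormedAddCommGroup H] [InnerProductSpace ℝ H]
    (A : X →L[ℝ] H) (J : X → ℝ≥0∞) (PA : H → X) : Prop :=
  ∀ g : H, J (PA g) = 0 ∧ (∀ u, J u = 0 → ‖A (PA g) - g‖ ≤ ‖A u - g‖) ∧
    (∀ u, J u = 0 → ‖A u - g‖ ≤ ‖A (PA g) - g‖ → u = PA g)

/-- Assumption 2: generalized Poincaré inequality. -/
def PoincareIneq {X : Type*} [NormedAddCommGroup X] [NormedSpace ℝ X]
    {H : Type*} [NormedAddCommGroup H] [InnerProductSpace ℝ H]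
    (A : X →L[ℝ] H) (J : X → ℝ≥0∞) (PA : H → X) : Prop :=
  ∃ C > (0:ℝ), ∀ u, ENNReal.ofReal ‖u - PA (A u)‖ ≤ ENNReal.ofReal C * J u

/-- The subdifferential of `J : H → [0,∞]` at `u ∈ H`, with the dual identified with `H`. -/
def subdiffH {H : Type*} [NormedAddCommGroup H] [InnerProductSpace ℝ H]
    (J : H → ℝ≥0∞) (u : H) : Set H :=
  {p | ∀ v, (J u : EReal) + ((⟪p, v - u⟫ : ℝ) : EReal) ≤ (J v : EReal)}

/-!
For `τ` in the `k`-th interval, `p := (f - v_τ) / τ` equals `∑ᵢ min 1 (τᵢ₊₁ / τ) sgn(γᵢ) λᵢ uᵢ`.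
The weights `min 1 (τⱼ / τ)` increase from `0` to `1`, so by Abel summation `p` is a convex
combination of the vectors `p_j` of (SUB0) and lies in the convex set `∂J(0)`. Orthogonality and
`J(uᵢ) ≤ λᵢ‖uᵢ‖²` give `J(v_τ) ≤ ⟨p, v_τ⟩`, hence `p ∈ ∂J(v_τ)`: this is the optimality condition
`f - v_τ ∈ τ ∂J(v_τ)`, and expanding `‖v - f‖²` around `v_τ` shows that every `v` has energy at
least that of `v_τ` plus `½‖v - v_τ‖²`.
-/

section Subdifferential

variable {H : Type*} [NormedAddCommGroup H] [InnerProductSpace ℝ H] {J : H → ℝ≥0∞}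

theorem convex_subdiffH (J : H → ℝ≥0∞) (u : H) : Convex ℝ (subdiffH J u) := by
  have hset : subdiffH J u =
      ⋂ v, (innerₛₗ ℝ (v - u)) ⁻¹' {r : ℝ | (J u : EReal) + r ≤ J v} := by
    ext p
    simp only [subdiffH, Set.mem_ofPred_eq, Set.mem_iInter, Set.mem_preimage,
      innerₛₗ_apply_apply, real_inner_comm]
  rw [hset]
  refine convex_iInter fun v => (Set.OrdConnected.convex ?_).linear_preimage _
  exact ⟨fun x _ y hy r hr =>
    le_trans (add_le_add_right (EReal.coe_le_coe_iff.mpr hr.2) _) hy⟩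

theorem le_ofReal_inner_of_mem_subdiffH (hJ0 : J 0 = 0) {p u : H} (hp : p ∈ subdiffH J u) :
    J u ≤ ENNReal.ofReal ⟪p, u⟫ := by
  have h := hp 0
  rw [hJ0, zero_sub, inner_neg_right, EReal.coe_neg, ← sub_eq_add_neg,
    EReal.coe_ennreal_zero, EReal.sub_nonpos] at h
  simpa using EReal.toENNReal_le_toENNReal h

theorem le_ofReal_mul_norm_sq_of_smul_mem_subdiffH (hJ0 : J 0 = 0) {lam : ℝ} {u : H}
    (h : lam • u ∈ subdiffH J u) : J u ≤ ENNReal.ofReal (lam * ‖u‖ ^ 2) := by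
  simpa [real_inner_smul_left, real_inner_self_eq_norm_sq] using
    le_ofReal_inner_of_mem_subdiffH hJ0 h

theorem mem_subdiffH_of_mem_subdiffH_zero (hJ0 : J 0 = 0) {p u : H} (hp : p ∈ subdiffH J 0)
    (hu : J u ≤ ENNReal.ofReal ⟪p, u⟫) (hpu : 0 ≤ ⟪p, u⟫) : p ∈ subdiffH J u := by
  intro v
  have hv := hp v
  rw [hJ0, EReal.coe_ennreal_zero, zero_add, sub_zero] at hv
  calc (J u : EReal) + (⟪p, v - u⟫ : ℝ) ≤ (⟪p, u⟫ : ℝ) + (⟪p, v - u⟫ : ℝ) := by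
        gcongr
        simpa [EReal.coe_ennreal_ofReal, hpu] using EReal.coe_ennreal_le_coe_ennreal_iff.mpr hu
    _ = (⟪p, v⟫ : ℝ) := by rw [← EReal.coe_add, inner_sub_right, add_sub_cancel]
    _ ≤ J v := hv

theorem toReal_add_inner_le_of_mem_subdiffH {p u v : H} (hp : p ∈ subdiffH J u)
    (hv : J v ≠ ⊤) : J u ≠ ⊤ ∧ (J u).toReal + ⟪p, v - u⟫ ≤ (J v).toReal := by
  have h := hp v
  have hu : J u ≠ ⊤ := by
    rintro hu
    rw [hu, EReal.coe_ennreal_top, EReal.top_add_of_ne_bot (EReal.coe_ne_bot _), top_le_iff,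
      EReal.coe_ennreal_eq_top_iff] at h
    exact hv h
  rw [← EReal.coe_ennreal_toReal hu, ← EReal.coe_ennreal_toReal hv, ← EReal.coe_add,
    EReal.coe_le_coe_iff] at h
  exact ⟨hu, h⟩

end Subdifferential

def rofEnergy {H : Type*} [NormedAddCommGroup H] [InnerProductSpace ℝ H]
    (J : H → ℝ≥0∞) (f : H) (τ : ℝ) (v : H) : ℝ≥0∞ :=
  ENNReal.ofReal ((1 / 2) * ‖v - f‖ ^ 2) + ENNReal.ofReal τ * J v

section Energy

variable {H : Type*} [NormedAddCommGroup H] [InnerProductSpace ℝ H] {J : H → ℝ≥0∞}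
  {f p v₀ : H} {τ : ℝ}

theorem rofEnergy_add_le_of_mem_subdiffH (hτ : 0 < τ) (hp : p ∈ subdiffH J v₀)
    (hf : f - v₀ = τ • p) (v : H) :
    rofEnergy J f τ v₀ + ENNReal.ofReal ((1 / 2) * ‖v - v₀‖ ^ 2) ≤ rofEnergy J f τ v := by
  by_cases hv : J v = ⊤
  · simp [rofEnergy, hv, ENNReal.mul_top, hτ]
  obtain ⟨hv₀, hsub⟩ := toReal_add_inner_le_of_mem_subdiffH hp hv
  have hnorm : ‖v - f‖ ^ 2 = ‖v - v₀‖ ^ 2 - 2 * τ * ⟪p, v - v₀⟫ + ‖v₀ - f‖ ^ 2 := by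
    rw [show v - f = (v - v₀) - (f - v₀) by abel, norm_sub_sq_real, hf, real_inner_smul_right,
      norm_smul, show v₀ - f = -(f - v₀) by abel, norm_neg, hf, norm_smul, real_inner_comm]
    ring
  have hreal : (1 / 2) * ‖v₀ - f‖ ^ 2 + τ * (J v₀).toReal + (1 / 2) * ‖v - v₀‖ ^ 2 ≤
      (1 / 2) * ‖v - f‖ ^ 2 + τ * (J v).toReal := by
    nlinarith [mul_le_mul_of_nonneg_left hsub hτ.le]
  unfold rofEnergy
  rw [← ENNReal.ofReal_toReal hv₀, ← ENNReal.ofReal_toReal hv, ← ENNReal.ofReal_mul hτ.le,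
    ← ENNReal.ofReal_mul hτ.le, ← ENNReal.ofReal_add (by positivity) (by positivity),
    ← ENNReal.ofReal_add (by positivity) (by positivity),
    ← ENNReal.ofReal_add (by positivity) (by positivity)]
  exact ENNReal.ofReal_le_ofReal hreal

theorem rofEnergy_le_of_mem_subdiffH (hτ : 0 < τ) (hp : p ∈ subdiffH J v₀)
    (hf : f - v₀ = τ • p) (v : H) : rofEnergy J f τ v₀ ≤ rofEnergy J f τ v :=
  le_self_add.trans (rofEnergy_add_le_of_mem_subdiffH hτ hp hf v)

theorem eq_of_rofEnergy_le_of_mem_subdiffH (hτ : 0 < τ) (hp : p ∈ subdiffH J v₀)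
    (hf : f - v₀ = τ • p) (hv₀ : J v₀ ≠ ⊤) {v : H}
    (hv : rofEnergy J f τ v ≤ rofEnergy J f τ v₀) : v = v₀ := by
  have hfin : rofEnergy J f τ v₀ ≠ ⊤ := by
    simp [rofEnergy, hv₀, ENNReal.mul_eq_top]
  have h := (rofEnergy_add_le_of_mem_subdiffH hτ hp hf v).trans (hv.trans_eq (add_zero _).symm)
  have hnorm : (1 / 2) * ‖v - v₀‖ ^ 2 ≤ 0 :=
    ENNReal.ofReal_eq_zero.1 (nonpos_iff_eq_zero.1 (ENNReal.le_of_add_le_add_left hfin h))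
  have : ‖v - v₀‖ = 0 := by nlinarith [norm_nonneg (v - v₀)]
  exact sub_eq_zero.1 (norm_eq_zero.1 this)

end Energy

theorem Convex.sum_smul_mem_of_sum_Ico_mem {E : Type*} [AddCommGroup E] [Module ℝ E]
    {C : Set E} (hC : Convex ℝ C) {n : ℕ} {q : ℕ → E} {t : ℕ → ℝ}
    (hq : ∀ j < n, ∑ i ∈ Finset.Ico j n, q i ∈ C) (ht₀ : t 0 = 0)
    (ht : ∀ j < n, t j ≤ t (j + 1)) (htn : t n = 1) :
    ∑ i ∈ Finset.range n, t (i + 1) • q i ∈ C := by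
  have habel : ∑ i ∈ Finset.range n, t (i + 1) • q i =
      ∑ j ∈ Finset.range n, (t (j + 1) - t j) • ∑ i ∈ Finset.Ico j n, q i := by
    simp only [Finset.smul_sum, Finset.range_eq_Ico, Finset.sum_Ico_Ico_comm, ← Finset.sum_smul]
    simp only [← Finset.range_eq_Ico, Finset.sum_range_sub, ht₀, sub_zero]
  rw [habel]
  refine hC.sum_mem (fun j hj => sub_nonneg.2 (ht j (Finset.mem_range.1 hj))) ?_
    (fun j hj => hq j (Finset.mem_range.1 hj))
  rw [Finset.sum_range_sub, htn, ht₀, sub_zero]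

theorem inner_sum_smul_of_orthogonal {H : Type*} [NormedAddCommGroup H] [InnerProductSpace ℝ H]
    {ι : Type*} {s : Finset ι} (a : ι → ℝ) {u : ι → H} {i : ι} (hi : i ∈ s)
    (horth : ∀ j ∈ s, j ≠ i → ⟪u j, u i⟫ = 0) :
    ⟪∑ j ∈ s, a j • u j, u i⟫ = a i * ‖u i‖ ^ 2 := by
  rw [sum_inner, Finset.sum_eq_single_of_mem i hi fun j hj hji => by
    rw [real_inner_smul_left, horth j hj hji, mul_zero]]
  rw [real_inner_smul_left, real_inner_self_eq_norm_sq]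

theorem Real.sign_mul_abs (r : ℝ) : Real.sign r * |r| = r := by
  rcases lt_trichotomy r 0 with hr | rfl | hr
  · rw [Real.sign_of_neg hr, abs_of_neg hr, neg_one_mul, neg_neg]
  · rw [abs_zero, mul_zero]
  · rw [Real.sign_of_pos hr, abs_of_pos hr, one_mul]

theorem Real.sign_mul_self (r : ℝ) : Real.sign r * Real.sign r = |Real.sign r| := by
  rcases Real.sign_apply_eq r with h | h | h <;> simp [h]

section OneHomogeneous

variable {H : Type*} [NormedAddCommGroup H] [InnerProductSpace ℝ H] {J : H → ℝ≥0∞}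

theorem AbsOneHom.map_zero (hJ : AbsOneHom J) : J 0 = 0 := by
  simpa using hJ 0 0

theorem AbsOneHom.map_add_le (hJ : AbsOneHom J) (hconv : EConvexFn J) (x y : H) :
    J (x + y) ≤ J x + J y := by
  have hmid := hconv x y (1 / 2) (1 / 2) (by norm_num) (by norm_num) (by norm_num)
  calc J (x + y) = ENNReal.ofReal 2 * J ((1 / 2 : ℝ) • x + (1 / 2 : ℝ) • y) := by
        rw [← abs_two, ← hJ, smul_add, smul_smul, smul_smul]
        norm_num
    _ ≤ ENNReal.ofReal 2 * (ENNReal.ofReal (1 / 2) * J x + ENNReal.ofReal (1 / 2) * J y) := by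
        gcongr
    _ = J x + J y := by
        rw [mul_add, ← mul_assoc, ← mul_assoc, ← ENNReal.ofReal_mul zero_le_two]
        norm_num

theorem AbsOneHom.map_sum_smul_le (hJ : AbsOneHom J) (hconv : EConvexFn J) {ι : Type*}
    (s : Finset ι) (c m : ι → ℝ) (u : ι → H) (hu : ∀ i ∈ s, J (u i) ≤ ENNReal.ofReal (m i))
    (hm : ∀ i ∈ s, 0 ≤ m i) :
    J (∑ i ∈ s, c i • u i) ≤ ENNReal.ofReal (∑ i ∈ s, |c i| * m i) :=
  calc J (∑ i ∈ s, c i • u i) ≤ ∑ i ∈ s, J (c i • u i) :=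
        Finset.le_sum_of_subadditive J hJ.map_zero.le (hJ.map_add_le hconv) s _
    _ ≤ ∑ i ∈ s, ENNReal.ofReal (|c i| * m i) := Finset.sum_le_sum fun i hi => by
        rw [hJ, ENNReal.ofReal_mul (abs_nonneg _)]
        gcongr
        exact hu i hi
    _ = ENNReal.ofReal (∑ i ∈ s, |c i| * m i) :=
        (ENNReal.ofReal_sum_of_nonneg fun i hi => mul_nonneg (abs_nonneg _) (hm i hi)).symm

end OneHomogeneous

/-- The thresholds `τ₀ = 0`, `τᵢ₊₁ = |γᵢ| / λᵢ` of the paper, for `0`-based sequences `γ`, `lam`. -/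
def threshold (γ lam : ℕ → ℝ) : ℕ → ℝ
  | 0 => 0
  | i + 1 => |γ i| / lam i

theorem threshold_monotoneOn {γ lam : ℕ → ℝ} {n : ℕ} (hlam : ∀ i < n, 0 ≤ lam i)
    (hord : ∀ i, i + 1 < n → |γ i| / lam i ≤ |γ (i + 1)| / lam (i + 1)) :
    MonotoneOn (threshold γ lam) (Set.Iic n) := by
  refine monotoneOn_of_le_add_one Set.ordConnected_Iic fun j _ _ hj => ?_
  rcases j with _ | i
  · exact div_nonneg (abs_nonneg _) (hlam 0 hj)
  · exact hord i hj

def eigenCertificate {H : Type*} [NormedAddCommGroup H] [InnerProductSpace ℝ H]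
    (γ lam : ℕ → ℝ) (u : ℕ → H) (n : ℕ) (τ : ℝ) : H :=
  ∑ i ∈ Finset.range n, (min 1 (threshold γ lam (i + 1) / τ) * (Real.sign (γ i) * lam i)) • u i

section Certificate

variable {H : Type*} [NormedAddCommGroup H] [InnerProductSpace ℝ H] {J : H → ℝ≥0∞}
  {γ lam : ℕ → ℝ} {u : ℕ → H} {n k : ℕ} {τ : ℝ}

theorem eigenCertificate_mem_subdiffH_zero
    (hsub0 : ∀ k < n, ∑ i ∈ Finset.Ico k n, (Real.sign (γ i) * lam i) • u i ∈ subdiffH J 0)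
    (hT : MonotoneOn (threshold γ lam) (Set.Iic n)) (hτ : 0 < τ)
    (hτn : τ ≤ threshold γ lam n) : eigenCertificate γ lam u n τ ∈ subdiffH J 0 := by
  have hweights := (convex_subdiffH J 0).sum_smul_mem_of_sum_Ico_mem
    (t := fun j => min 1 (threshold γ lam j / τ)) hsub0 (by simp [threshold])
    (fun j hj => by
      gcongr
      exact hT (Set.mem_Iic.2 hj.le) (Set.mem_Iic.2 hj) (Nat.le_succ j))
    (min_eq_left ((one_le_div hτ).2 hτn))
  simpa only [eigenCertificate, smul_smul] using hweights

theorem sum_sub_sum_Ico_eq_smul_eigenCertificate (hk : k ≤ n) (hτ : 0 < τ)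
    (hlam : ∀ i < k, lam i ≠ 0) (hlt : ∀ i < k, threshold γ lam (i + 1) < τ)
    (hle : ∀ i ∈ Finset.Ico k n, τ ≤ threshold γ lam (i + 1)) :
    ∑ i ∈ Finset.range n, γ i • u i -
        ∑ i ∈ Finset.Ico k n, (Real.sign (γ i) * (|γ i| - τ * lam i)) • u i =
      τ • eigenCertificate γ lam u n τ := by
  rw [eigenCertificate, ← Finset.sum_range_add_sum_Ico _ hk, ← Finset.sum_range_add_sum_Ico _ hk,
    add_sub_assoc, ← Finset.sum_sub_distrib, smul_add, Finset.smul_sum, Finset.smul_sum]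
  congr 1 <;> refine Finset.sum_congr rfl fun i hi => ?_ <;> rw [smul_smul]
  · have hik := Finset.mem_range.1 hi
    rw [min_eq_right ((div_le_one hτ).2 (hlt i hik).le)]
    congr 1
    simp only [threshold]
    field_simp [hlam i hik]
    rw [mul_comm, Real.sign_mul_abs]
  · rw [min_eq_left ((one_le_div hτ).2 (hle i hi)), ← sub_smul]
    congr 1
    nth_rw 1 [← Real.sign_mul_abs (γ i)]
    ring

theorem inner_eigenCertificate_sum_Ico
    (horth : ∀ i < n, ∀ j < n, i ≠ j → ⟪u i, u j⟫ = 0) (hτ : 0 < τ)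
    (hlam : ∀ i ∈ Finset.Ico k n, 0 < lam i)
    (hle : ∀ i ∈ Finset.Ico k n, τ ≤ threshold γ lam (i + 1)) :
    ⟪eigenCertificate γ lam u n τ,
        ∑ i ∈ Finset.Ico k n, (Real.sign (γ i) * (|γ i| - τ * lam i)) • u i⟫ =
      ∑ i ∈ Finset.Ico k n, |Real.sign (γ i) * (|γ i| - τ * lam i)| * (lam i * ‖u i‖ ^ 2) := by
  rw [inner_sum]
  refine Finset.sum_congr rfl fun i hi => ?_
  have hin := (Finset.mem_Ico.1 hi).2
  have hgap : 0 ≤ |γ i| - τ * lam i := sub_nonneg.2 ((le_div_iff₀ (hlam i hi)).1 (hle i hi))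
  rw [real_inner_smul_right, eigenCertificate, inner_sum_smul_of_orthogonal _
      (Finset.mem_range.2 hin) fun j hj hji => horth j (Finset.mem_range.1 hj) i hin hji,
    min_eq_left ((one_le_div hτ).2 (hle i hi)), abs_mul, abs_of_nonneg hgap,
    ← Real.sign_mul_self]
  ring

end Certificate

theorem linear_combination_of_eigenvectors_general
    {H : Type*} [NormedAddCommGroup H] [InnerProductSpace ℝ H]
    (J : H → ℝ≥0∞)
    (hconv : ∀ (u v : H) (a b : ℝ), 0 ≤ a → 0 ≤ b → a + b = 1 →
      J (a • u + b • v) ≤ ENNReal.ofReal a * J u + ENNReal.ofReal b * J v)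
    (hhom : ∀ (c : ℝ) (u : H), J (c • u) = ENNReal.ofReal |c| * J u)
    (n : ℕ) (γ lam : ℕ → ℝ) (u : ℕ → H) (f : H)
    (hf : f = ∑ i ∈ Finset.range n, γ i • u i)
    (hlam : ∀ i < n, 0 < lam i)
    (heig : ∀ i < n, lam i • u i ∈ subdiffH J (u i))
    (horth : ∀ i < n, ∀ j < n, i ≠ j → (⟪u i, u j⟫ : ℝ) = 0)
    (hsub0 : ∀ k < n,
      (∑ i ∈ Finset.Ico k n, (Real.sign (γ i) * lam i) • u i) ∈ subdiffH J 0)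
    (hord : ∀ i : ℕ, i + 1 < n → |γ i| / lam i < |γ (i + 1)| / lam (i + 1)) :
    ∀ k < n, ∀ τ : ℝ,
      (k = 0 → 0 < τ) → (∀ k' : ℕ, k = k' + 1 → |γ k'| / lam k' < τ) →
      τ ≤ |γ k| / lam k →
      (∀ v : H,
        ENNReal.ofReal ((1/2) * ‖(∑ i ∈ Finset.Ico k n,
            (Real.sign (γ i) * (|γ i| - τ * lam i)) • u i) - f‖ ^ 2) +
          ENNReal.ofReal τ * J (∑ i ∈ Finset.Ico k n,
            (Real.sign (γ i) * (|γ i| - τ * lam i)) • u i) ≤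
        ENNReal.ofReal ((1/2) * ‖v - f‖ ^ 2) + ENNReal.ofReal τ * J v) ∧
      (∀ v : H,
        (∀ v' : H, ENNReal.ofReal ((1/2) * ‖v - f‖ ^ 2) + ENNReal.ofReal τ * J v ≤
          ENNReal.ofReal ((1/2) * ‖v' - f‖ ^ 2) + ENNReal.ofReal τ * J v') →
        v = ∑ i ∈ Finset.Ico k n, (Real.sign (γ i) * (|γ i| - τ * lam i)) • u i) := by
  intro k hk τ hτ₀ hτsucc hτle
  have hJ0 : J 0 = 0 := AbsOneHom.map_zero hhom
  have hT := threshold_monotoneOn (fun i hi => (hlam i hi).le) fun i hi => (hord i hi).le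
  have hτk : threshold γ lam k < τ := by
    rcases k with _ | k
    exacts [hτ₀ rfl, hτsucc k rfl]
  have hτ : 0 < τ := (hT (Set.mem_Iic.2 n.zero_le) (Set.mem_Iic.2 hk.le) k.zero_le).trans_lt hτk
  have hlt : ∀ i < k, threshold γ lam (i + 1) < τ := fun i hi =>
    (hT (Set.mem_Iic.2 (hi.trans hk)) (Set.mem_Iic.2 hk.le) hi).trans_lt hτk
  have hle : ∀ i ∈ Finset.Ico k n, τ ≤ threshold γ lam (i + 1) := fun i hi =>
    have ⟨hki, hin⟩ := Finset.mem_Ico.1 hi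
    hτle.trans (hT (Set.mem_Iic.2 hk) (Set.mem_Iic.2 hin) (Nat.succ_le_succ hki))
  have hlam' : ∀ i ∈ Finset.Ico k n, 0 < lam i := fun i hi => hlam i (Finset.mem_Ico.1 hi).2
  set p := eigenCertificate γ lam u n τ
  set vτ := ∑ i ∈ Finset.Ico k n, (Real.sign (γ i) * (|γ i| - τ * lam i)) • u i
  have hfp : f - vτ = τ • p := hf ▸ sum_sub_sum_Ico_eq_smul_eigenCertificate hk.le hτ
    (fun i hi => (hlam i (hi.trans hk)).ne') hlt hle
  have hpv := inner_eigenCertificate_sum_Ico horth hτ hlam' hle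
  have hJv : J vτ ≤ ENNReal.ofReal ⟪p, vτ⟫ := hpv ▸ AbsOneHom.map_sum_smul_le hhom hconv _ _ _ _
    (fun i hi => le_ofReal_mul_norm_sq_of_smul_mem_subdiffH hJ0 (heig i (Finset.mem_Ico.1 hi).2))
    fun i hi => mul_nonneg (hlam' i hi).le (sq_nonneg _)
  have hp0 : p ∈ subdiffH J 0 := eigenCertificate_mem_subdiffH_zero hsub0 hT hτ
    (hτle.trans (hT (Set.mem_Iic.2 hk) (Set.mem_Iic.2 le_rfl) hk))
  have hpv_nonneg : 0 ≤ ⟪p, vτ⟫ := hpv ▸ Finset.sum_nonneg fun i hi =>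
    mul_nonneg (abs_nonneg _) (mul_nonneg (hlam' i hi).le (sq_nonneg _))
  have hp : p ∈ subdiffH J vτ := mem_subdiffH_of_mem_subdiffH_zero hJ0 hp0 hJv hpv_nonneg
  exact ⟨rofEnergy_le_of_mem_subdiffH hτ hp hfp, fun v hv => eq_of_rofEnergy_le_of_mem_subdiffH hτ
    hp hfp (ne_top_of_le_ne_top ENNReal.ofReal_ne_top hJv) (hv vτ)⟩

/-- Linear combination of eigenvectors I, Theorem 4.2.
Let `f = Σ_{i<n} γ_i u_i` with pairwise orthogonal eigenvectors `λ_i u_i ∈ ∂J(u_i)`,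
`γ_i ≠ 0`, `λ_i > 0`, satisfying the (SUB0) condition
`p_k := Σ_{i=k}^{n-1} sgn(γ_i) λ_i u_i ∈ ∂J(0)` and the ordering
`|γ_i|/λ_i < |γ_{i+1}|/λ_{i+1}`. Then, with `τ_0 = 0` and `τ_{k+1} = |γ_k|/λ_k`, for every
`k < n` and `τ_k < τ ≤ τ_{k+1}` the (unique) minimizer of
`v ↦ ½‖v − f‖² + τ J(v)` is `v_τ = Σ_{i=k}^{n-1} sgn(γ_i)(|γ_i| − τ λ_i) u_i`. -/
theorem linear_combination_of_eigenvectors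
    {H : Type*} [NormedAddCommGroup H] [InnerProductSpace ℝ H]
    (J : H → ℝ≥0∞)
    (hproper : ∃ v, J v ≠ ⊤)
    (hconv : ∀ (u v : H) (a b : ℝ), 0 ≤ a → 0 ≤ b → a + b = 1 →
      J (a • u + b • v) ≤ ENNReal.ofReal a * J u + ENNReal.ofReal b * J v)
    (hlsc : LowerSemicontinuous J)
    (hhom : ∀ (c : ℝ) (u : H), J (c • u) = ENNReal.ofReal |c| * J u)
    (n : ℕ) (γ lam : ℕ → ℝ) (u : ℕ → H) (f : H)
    (hf : f = ∑ i ∈ Finset.range n, γ i • u i)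
    (hγ : ∀ i < n, γ i ≠ 0)
    (hlam : ∀ i < n, 0 < lam i)
    (heig : ∀ i < n, lam i • u i ∈ subdiffH J (u i))
    (horth : ∀ i < n, ∀ j < n, i ≠ j → (⟪u i, u j⟫ : ℝ) = 0)
    (hsub0 : ∀ k < n,
      (∑ i ∈ Finset.Ico k n, (Real.sign (γ i) * lam i) • u i) ∈ subdiffH J 0)
    (hord : ∀ i : ℕ, i + 1 < n → |γ i| / lam i < |γ (i + 1)| / lam (i + 1)) :
    ∀ k < n, ∀ τ : ℝ,
      (k = 0 → 0 < τ) → (∀ k' : ℕ, k = k' + 1 → |γ k'| / lam k' < τ) →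
      τ ≤ |γ k| / lam k →
      (∀ v : H,
        ENNReal.ofReal ((1/2) * ‖(∑ i ∈ Finset.Ico k n,
            (Real.sign (γ i) * (|γ i| - τ * lam i)) • u i) - f‖ ^ 2) +
          ENNReal.ofReal τ * J (∑ i ∈ Finset.Ico k n,
            (Real.sign (γ i) * (|γ i| - τ * lam i)) • u i) ≤
        ENNReal.ofReal ((1/2) * ‖v - f‖ ^ 2) + ENNReal.ofReal τ * J v) ∧
      (∀ v : H,
        (∀ v' : H, ENNReal.ofReal ((1/2) * ‖v - f‖ ^ 2) + ENNReal.ofReal τ * J v ≤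
          ENNReal.ofReal ((1/2) * ‖v' - f‖ ^ 2) + ENNReal.ofReal τ * J v') →
        v = ∑ i ∈ Finset.Ico k n, (Real.sign (γ i) * (|γ i| - τ * lam i)) • u i) :=
  linear_combination_of_eigenvectors_general J hconv hhom n γ lam u f hf hlam heig horth hsub0 hord

end
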